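/- A two-sided ideal I of the incidence algebra A is a maximal indecomposable ideal (indecomposable and properly contained in no other indecomposable ideal) if and only if I = A[xx]A for some x ∈ C. -/

import Mathlib

open Classical in
/-- The generator `[xy]` of the incidence algebra over `ℂ`:
the "matrix unit" supported at `(x, y)` (zero unless `x ≤ y`). -/
noncomputable def gen {C : Type*} [PartialOrder C] (x y : C) :
    IncidenceAlgebra ℂ C :=
  ⟨fun a b => if a = x ∧ b = y ∧ x ≤ y then 1 else 0, by
    intro a b hab
    rw [if_neg]
    rintro ⟨rfl, rfl, hxy⟩
    exact hab hxy⟩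

/-- A two-sided ideal is indecomposable if it is nonzero and is not the sum (join)
of two ideals each distinct from itself. -/
def IsIndecomposable {R : Type*} [NonUnitalNonAssocRing R] (I : TwoSidedIdeal R) : Prop :=
  I ≠ ⊥ ∧ ∀ I₁ I₂ : TwoSidedIdeal R, I = I₁ ⊔ I₂ → I₁ = I ∨ I₂ = I

/-- A maximal indecomposable ideal: indecomposable and properly contained in no
other indecomposable ideal. -/
def IsMaximalIndecomposable {R : Type*} [NonUnitalNonAssocRing R]
    (I : TwoSidedIdeal R) : Prop :=
  IsIndecomposable I ∧ ∀ J : TwoSidedIdeal R, IsIndecomposable J → I ≤ J → I = J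

section Aux
variable {C : Type*} [Fintype C] [PartialOrder C] [DecidableEq C] [LocallyFiniteOrder C]

open Classical in
lemma gen_apply (x y a b : C) :
    gen x y a b = if a = x ∧ b = y ∧ x ≤ y then 1 else 0 := by
  simp only [gen, IncidenceAlgebra.coe_mk]
  congr

lemma gen_self_apply {x y : C} (h : x ≤ y) : gen x y x y = 1 := by
  rw [gen_apply, if_pos ⟨rfl, rfl, h⟩]

lemma gen_ne_zero {x y : C} (h : x ≤ y) : gen (C := C) x y ≠ 0 := by
  intro h0
  have : gen x y x y = (0 : IncidenceAlgebra ℂ C) x y := by rw [h0]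
  rw [gen_self_apply h, IncidenceAlgebra.zero_apply] at this
  exact one_ne_zero this

lemma mul_gen_diag (f : IncidenceAlgebra ℂ C) (y a b : C) :
    (f * gen y y) a b = if b = y then f a y else 0 := by
  rw [IncidenceAlgebra.mul_apply]
  by_cases hb : b = y
  · subst hb
    rw [if_pos rfl]
    by_cases hab : a ≤ b
    · rw [Finset.sum_eq_single b]
      · rw [gen_self_apply le_rfl, mul_one]
      · intro c hc hne
        rw [gen_apply, if_neg, mul_zero]
        rintro ⟨rfl, -, -⟩; exact hne rfl
      · intro h; exact absurd (Finset.mem_Icc.2 ⟨hab, le_rfl⟩) h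
    · rw [IncidenceAlgebra.apply_eq_zero_of_not_le hab]
      exact Finset.sum_eq_zero fun c hc => by
        rw [gen_apply, if_neg, mul_zero]
        rintro ⟨rfl, -, -⟩
        exact hab (Finset.mem_Icc.1 hc).1
  · rw [if_neg hb]
    exact Finset.sum_eq_zero fun c hc => by
      rw [gen_apply, if_neg, mul_zero]
      rintro ⟨-, rfl, -⟩; exact hb rfl

lemma diag_mul (f : IncidenceAlgebra ℂ C) (x a b : C) :
    (gen x x * f) a b = if a = x then f x b else 0 := by
  rw [IncidenceAlgebra.mul_apply]
  by_cases ha : a = x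
  · subst ha
    rw [if_pos rfl]
    by_cases hab : a ≤ b
    · rw [Finset.sum_eq_single a]
      · rw [gen_self_apply le_rfl, one_mul]
      · intro c hc hne
        rw [gen_apply, if_neg, zero_mul]
        rintro ⟨-, rfl, -⟩; exact hne rfl
      · intro h; exact absurd (Finset.mem_Icc.2 ⟨le_rfl, hab⟩) h
    · rw [IncidenceAlgebra.apply_eq_zero_of_not_le hab]
      exact Finset.sum_eq_zero fun c hc => by
        rw [gen_apply, if_neg, zero_mul]
        rintro ⟨-, rfl, -⟩
        exact hab (Finset.mem_Icc.1 hc).2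
  · rw [if_neg ha]
    exact Finset.sum_eq_zero fun c hc => by
      rw [gen_apply, if_neg, zero_mul]
      rintro ⟨rfl, -, -⟩; exact ha rfl

lemma sandwich (x y : C) (f : IncidenceAlgebra ℂ C) :
    gen x x * f * gen y y = f x y • gen x y := by
  ext a b _
  rw [mul_gen_diag, IncidenceAlgebra.constSMul_apply, gen_apply, smul_eq_mul]
  by_cases hb : b = y
  · rw [if_pos hb, diag_mul]
    by_cases ha : a = x
    · rw [if_pos ha]
      by_cases hxy : x ≤ y
      · rw [if_pos ⟨ha, hb, hxy⟩, mul_one]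
      · rw [if_neg (by rintro ⟨-, -, h⟩; exact hxy h), mul_zero,
          IncidenceAlgebra.apply_eq_zero_of_not_le hxy]
    · rw [if_neg ha, if_neg (by rintro ⟨h, -, -⟩; exact ha h), mul_zero]
  · rw [if_neg hb, if_neg (by rintro ⟨-, h, -⟩; exact hb h), mul_zero]

lemma gen_mul_gen {x y : C} (h : x ≤ y) : gen x x * gen x y = gen (C := C) x y := by
  ext a b _
  rw [diag_mul]
  by_cases ha : a = x
  · subst ha; rw [if_pos rfl]
  · rw [if_neg ha, gen_apply, if_neg (by rintro ⟨h1, -, -⟩; exact ha h1)]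

lemma eq_sum (f : IncidenceAlgebra ℂ C) :
    f = ∑ p : C × C, f p.1 p.2 • gen p.1 p.2 := by
  ext a b hab
  have key : (∑ p : C × C, f p.1 p.2 • gen p.1 p.2) a b
      = ∑ p : C × C, (f p.1 p.2 • gen p.1 p.2) a b := by
    let E : IncidenceAlgebra ℂ C →+ ℂ :=
      { toFun := fun g => g a b, map_zero' := rfl, map_add' := fun _ _ => rfl }
    exact map_sum E _ _
  rw [key, Finset.sum_eq_single (a, b)]
  · rw [IncidenceAlgebra.constSMul_apply, gen_self_apply hab, smul_eq_mul, mul_one]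
  · intro p _ hne
    rw [IncidenceAlgebra.constSMul_apply, gen_apply, smul_eq_mul]
    rw [if_neg, mul_zero]
    rintro ⟨rfl, rfl, -⟩
    exact hne rfl
  · intro h; exact absurd (Finset.mem_univ _) h

lemma smul_mem' (I : TwoSidedIdeal (IncidenceAlgebra ℂ C)) (c : ℂ)
    {f : IncidenceAlgebra ℂ C} (hf : f ∈ I) : c • f ∈ I := by
  have : c • f = (c • (1 : IncidenceAlgebra ℂ C)) * f := by
    rw [smul_mul_assoc, one_mul]
  rw [this]
  exact I.mul_mem_left _ _ hf

lemma mem_of_apply_ne (I : TwoSidedIdeal (IncidenceAlgebra ℂ C))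
    {f : IncidenceAlgebra ℂ C} (hf : f ∈ I) {x y : C} (h : f x y ≠ 0) :
    gen x y ∈ I := by
  have h1 : f x y • gen x y ∈ I := by
    rw [← sandwich]
    exact I.mul_mem_right _ _ (I.mul_mem_left _ _ hf)
  have h2 := smul_mem' I (f x y)⁻¹ h1
  rwa [smul_smul, inv_mul_cancel₀ h, one_smul] at h2

lemma span_singleton_le {g : IncidenceAlgebra ℂ C}
    {I : TwoSidedIdeal (IncidenceAlgebra ℂ C)} (hg : g ∈ I) :
    TwoSidedIdeal.span {g} ≤ I := fun f hf =>
  TwoSidedIdeal.mem_span_iff.1 hf I (Set.singleton_subset_iff.2 hg)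

lemma gen_mem_span_self (x y : C) : gen x y ∈ TwoSidedIdeal.span {gen (C := C) x y} :=
  TwoSidedIdeal.subset_span rfl

lemma span_gen_indecomposable {x y : C} (h : x ≤ y) :
    IsIndecomposable (TwoSidedIdeal.span {gen (C := C) x y}) := by
  constructor
  · intro hb
    have := gen_mem_span_self x y
    rw [hb, TwoSidedIdeal.mem_bot] at this
    exact gen_ne_zero h this
  · intro I₁ I₂ heq
    have hg : gen x y ∈ I₁ ⊔ I₂ := heq ▸ gen_mem_span_self x y
    obtain ⟨g, hg1, g', hg2, hsum⟩ := TwoSidedIdeal.mem_sup.1 hg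
    have hval : g x y + g' x y = 1 := by
      have : (g + g') x y = gen x y x y := by rw [hsum]
      rwa [IncidenceAlgebra.add_apply, gen_self_apply h] at this
    by_cases hgz : g x y = 0
    · right
      have hne : g' x y ≠ 0 := by rw [hgz, zero_add] at hval; rw [hval]; exact one_ne_zero
      have hmem := mem_of_apply_ne I₂ hg2 hne
      have hle : I₂ ≤ TwoSidedIdeal.span {gen x y} := by rw [heq]; exact le_sup_right
      exact le_antisymm hle (span_singleton_le hmem)
    · left
      have hmem := mem_of_apply_ne I₁ hg1 hgz
      have hle : I₁ ≤ TwoSidedIdeal.span {gen x y} := by rw [heq]; exact le_sup_left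
      exact le_antisymm hle (span_singleton_le hmem)

open Classical in
noncomputable def suppIdeal (x y : C) : TwoSidedIdeal (IncidenceAlgebra ℂ C) :=
  TwoSidedIdeal.mk' {f | ∀ a b, f a b ≠ 0 → a ≤ x ∧ y ≤ b}
    (fun a b h => absurd rfl h)
    (fun {f g} hf hg a b hab => by
      by_cases h1 : f a b ≠ 0
      · exact hf a b h1
      · push_neg at h1
        refine hg a b fun h2 => hab ?_
        rw [IncidenceAlgebra.add_apply, h1, h2, add_zero])
    (fun {f} hf a b hab => hf a b fun h => hab (by rw [IncidenceAlgebra.neg_apply, h, neg_zero]))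
    (fun {f g} hg a b hab => by
      rw [IncidenceAlgebra.mul_apply] at hab
      obtain ⟨c, hc, hne⟩ := Finset.exists_ne_zero_of_sum_ne_zero hab
      have := hg c b (right_ne_zero_of_mul hne)
      exact ⟨le_trans (Finset.mem_Icc.1 hc).1 this.1, this.2⟩)
    (fun {f g} hf a b hab => by
      rw [IncidenceAlgebra.mul_apply] at hab
      obtain ⟨c, hc, hne⟩ := Finset.exists_ne_zero_of_sum_ne_zero hab
      have := hf a c (left_ne_zero_of_mul hne)
      exact ⟨this.1, le_trans this.2 (Finset.mem_Icc.1 hc).2⟩)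

lemma mem_suppIdeal_of_mem_span {x y : C} {f : IncidenceAlgebra ℂ C}
    (hf : f ∈ TwoSidedIdeal.span {gen (C := C) x y}) :
    ∀ a b, f a b ≠ 0 → a ≤ x ∧ y ≤ b := by
  have hsub : ({gen (C := C) x y} : Set _) ⊆ suppIdeal x y := by
    rw [Set.singleton_subset_iff, SetLike.mem_coe, suppIdeal, TwoSidedIdeal.mem_mk']
    intro a b hab
    rw [gen_apply] at hab
    by_cases h : a = x ∧ b = y ∧ x ≤ y
    · obtain ⟨rfl, rfl, h3⟩ := h
      exact ⟨le_rfl, le_rfl⟩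
    · exact absurd (if_neg h) hab
  have := TwoSidedIdeal.mem_span_iff.1 hf (suppIdeal x y) hsub
  rwa [suppIdeal, TwoSidedIdeal.mem_mk'] at this

lemma gen_mem_span_gen {a b x y : C} (hab : a ≤ b)
    (h : gen (C := C) a b ∈ TwoSidedIdeal.span {gen (C := C) x y}) :
    a ≤ x ∧ y ≤ b := by
  have := mem_suppIdeal_of_mem_span h a b
  rw [gen_self_apply hab] at this
  exact this one_ne_zero

open Classical in
lemma ideal_eq_sup (I : TwoSidedIdeal (IncidenceAlgebra ℂ C)) :
    I = (Finset.univ.filter (fun p : C × C => gen p.1 p.2 ∈ I)).sup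
        (fun p => TwoSidedIdeal.span {gen p.1 p.2}) := by
  apply le_antisymm
  · intro f hf
    rw [eq_sum f]
    apply TwoSidedIdeal.finsetSum_mem
    intro p _
    by_cases hp : f p.1 p.2 = 0
    · rw [hp, zero_smul]; exact TwoSidedIdeal.zero_mem _
    · have hmem : gen p.1 p.2 ∈ I := mem_of_apply_ne I hf hp
      have hps : p ∈ Finset.univ.filter (fun p : C × C => gen p.1 p.2 ∈ I) :=
        Finset.mem_filter.2 ⟨Finset.mem_univ _, hmem⟩
      exact Finset.le_sup (f := fun p : C × C => TwoSidedIdeal.span {gen p.1 p.2}) hps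
        (smul_mem' _ _ (gen_mem_span_self p.1 p.2))
  · apply Finset.sup_le
    intro p hp
    exact span_singleton_le (Finset.mem_filter.1 hp).2

lemma indecomposable_classification {I : TwoSidedIdeal (IncidenceAlgebra ℂ C)}
    (hI : IsIndecomposable I) :
    ∃ x y : C, x ≤ y ∧ I = TwoSidedIdeal.span {gen (C := C) x y} := by
  classical
  suffices h : ∃ x y : C, I = TwoSidedIdeal.span {gen (C := C) x y} by
    obtain ⟨x, y, hxy⟩ := h
    refine ⟨x, y, ?_, hxy⟩
    by_contra hle
    apply hI.1
    rw [hxy]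
    apply le_antisymm _ bot_le
    apply span_singleton_le
    have : gen (C := C) x y = 0 := by
      ext a b _
      rw [gen_apply, if_neg, IncidenceAlgebra.zero_apply]
      rintro ⟨-, -, h⟩; exact hle h
    rw [this]; exact TwoSidedIdeal.zero_mem _
  have key : ∀ s : Finset (C × C),
      I = s.sup (fun p => TwoSidedIdeal.span {gen (C := C) p.1 p.2}) →
      ∃ x y : C, I = TwoSidedIdeal.span {gen (C := C) x y} := by
    intro s
    induction s using Finset.induction_on with
    | empty => intro h; rw [Finset.sup_empty] at h; exact absurd h hI.1
    | @insert a s' ha ih =>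
      intro h
      rw [Finset.sup_insert] at h
      rcases hI.2 _ _ h with h1 | h1
      · exact ⟨a.1, a.2, h1.symm⟩
      · exact ih h1.symm
  exact key _ (ideal_eq_sup I)

end Aux

/-- A two-sided ideal of the incidence algebra is maximal indecomposable iff it is the
principal ideal generated by a diagonal generator `[xx]`. -/
theorem maximal_indecomposable_iff_diagonal {C : Type*} [Fintype C] [PartialOrder C] [DecidableEq C] [LocallyFiniteOrder C]
    (I : TwoSidedIdeal (IncidenceAlgebra ℂ C)) :
    IsMaximalIndecomposable I ↔ ∃ x : C, I = TwoSidedIdeal.span {gen x x} := by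
  constructor
  · rintro ⟨hind, hmax⟩
    obtain ⟨x, y, hxy, rfl⟩ := indecomposable_classification hind
    refine ⟨x, ?_⟩
    apply hmax _ (span_gen_indecomposable le_rfl)
    apply span_singleton_le
    rw [← gen_mul_gen hxy]
    exact TwoSidedIdeal.mul_mem_right _ _ _ (gen_mem_span_self x x)
  · rintro ⟨x, rfl⟩
    refine ⟨span_gen_indecomposable le_rfl, ?_⟩
    intro J hJ hle
    obtain ⟨a, b, hab, rfl⟩ := indecomposable_classification hJ
    have hx : gen (C := C) x x ∈ TwoSidedIdeal.span {gen (C := C) a b} :=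
      hle (gen_mem_span_self x x)
    obtain ⟨h1, h2⟩ := gen_mem_span_gen le_rfl hx
    have hax : a = x := le_antisymm (le_trans hab h2) h1
    have hbx : b = x := le_antisymm h2 (le_trans h1 hab)
    rw [hax, hbx]
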